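/- Let f(x) = step(β₀ + Σᵢ βᵢfᵢ(xᵢ)) with f(x) = 1, attained minima pᵢ, vᵢ = βᵢfᵢ(xᵢ) − pᵢ, and sort so v_{σ(1)} ≥ ⋯ ≥ v_{σ(n)}. Let k* be the smallest k such that β₀ + Σᵢ βᵢfᵢ(xᵢ) − Σ_{j≤k} v_{σ(j)} < 0. Then {σ(1),...,σ(k*)} is a cardinality-minimal contrastive reason: it is contrastive, and no subset of size < k* is contrastive for (f, x). -/
import Mathlib

lemma sum_eq_sum_orderEmbOfFin {t n : ℕ} (A : Finset (Fin n)) (ht : A.card = t) (g : Fin n → ℝ) :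
    ∑ i ∈ A, g i = ∑ j : Fin t, g (A.orderEmbOfFin ht j) := by
  set e := A.orderEmbOfFin ht with he
  have hA : A = Finset.univ.image e := by
    apply Finset.eq_of_subset_of_card_le
    · intro i hi
      exact Finset.mem_image.2 ⟨(A.orderIsoOfFin ht).symm ⟨i, hi⟩, Finset.mem_univ _, by
        simp [he, Finset.orderEmbOfFin]⟩
    · rw [Finset.card_image_of_injective _ e.injective]; simp [ht]
  rw [hA, Finset.sum_image (fun a _ b _ h => e.injective h)]

lemma le_orderEmbOfFin {t n : ℕ} (A : Finset (Fin n)) (ht : A.card = t) (j : Fin t) :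
    (j : ℕ) ≤ (A.orderEmbOfFin ht j : ℕ) := by
  set e := A.orderEmbOfFin ht with he
  obtain ⟨m, hm⟩ := j
  induction m with
  | zero => exact Nat.zero_le _
  | succ m ih =>
      have hm' : m < t := Nat.lt_of_succ_lt hm
      have h1 : (e ⟨m, hm'⟩ : ℕ) < (e ⟨m + 1, hm⟩ : ℕ) := by
        have : (⟨m, hm'⟩ : Fin t) < ⟨m + 1, hm⟩ := by simp [Fin.lt_def]
        exact e.strictMono this
      exact Nat.succ_le_of_lt (lt_of_le_of_lt (ih hm') h1)

/-- Sum of an antitone nonneg function over a set of card `t` is at most the sum over the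
first `t` indices. -/
lemma sum_le_sum_prefix {n t : ℕ} (g : Fin n → ℝ)
    (hmono : ∀ i j : Fin n, i ≤ j → g j ≤ g i)
    (A : Finset (Fin n)) (ht : A.card = t) :
    ∑ i ∈ A, g i ≤ ∑ i ∈ Finset.univ.filter (fun j : Fin n => (j : ℕ) < t), g i := by
  have htn : t ≤ n := by
    rw [← ht]; simpa using A.card_le_univ
  have hfilter : Finset.univ.filter (fun j : Fin n => (j : ℕ) < t)
      = Finset.univ.image (fun j : Fin t => Fin.castLE htn j) := by
    ext i
    simp only [Finset.mem_filter, Finset.mem_univ, true_and, Finset.mem_image]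
    constructor
    · intro hi; exact ⟨⟨i, hi⟩, rfl⟩
    · rintro ⟨j, rfl⟩; exact j.2
  rw [hfilter, Finset.sum_image (fun a _ b _ h => by
        exact (Fin.castLE_injective htn) h),
      sum_eq_sum_orderEmbOfFin A ht g]
  apply Finset.sum_le_sum
  intro j _
  apply hmono
  exact Fin.le_def.2 (by simpa using le_orderEmbOfFin A ht j)

/-- Correctness of the greedy algorithm for minimum contrastive reasons of an additive
classifier with `f(x) = 1`: sort features so that `v_{σ(1)} ≥ ⋯ ≥ v_{σ(n)}` where
`vᵢ = βᵢfᵢ(xᵢ) - pᵢ`; if `k` is the smallest index with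
`β₀ + Σᵢ βᵢfᵢ(xᵢ) - Σ_{j≤k} v_{σ(j)} < 0`, then the top-`k` prefix is a contrastive
reason and no subset of cardinality `< k` is contrastive. -/
theorem stmt17 {n : ℕ} {X : Fin n → Type} [∀ i, Nonempty (X i)]
    (f : ∀ i, X i → ℝ) (β : Fin n → ℝ) (β₀ : ℝ) (x : ∀ i, X i)
    (hx : 0 ≤ β₀ + ∑ j, β j * f j (x j))
    (p : Fin n → ℝ)
    (hp : ∀ i, (∃ a : X i, β i * f i a = p i) ∧ ∀ a : X i, p i ≤ β i * f i a)
    (σ : Equiv.Perm (Fin n))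
    (hsort : ∀ i j : Fin n, i ≤ j →
      β (σ j) * f (σ j) (x (σ j)) - p (σ j) ≤ β (σ i) * f (σ i) (x (σ i)) - p (σ i))
    (k : ℕ) (hk : k ≤ n)
    (hcontr : (β₀ + ∑ j, β j * f j (x j)) -
      ∑ i ∈ (Finset.univ.filter fun j : Fin n => (j : ℕ) < k).image σ,
        (β i * f i (x i) - p i) < 0)
    (hmin : ∀ k' < k, 0 ≤ (β₀ + ∑ j, β j * f j (x j)) -
      ∑ i ∈ (Finset.univ.filter fun j : Fin n => (j : ℕ) < k').image σ,
        (β i * f i (x i) - p i)) :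
    (∃ z : ∀ i, X i, β₀ + ∑ j, β j * f j
        (if j ∈ (Finset.univ.filter fun j : Fin n => (j : ℕ) < k).image σ
         then z j else x j) < 0) ∧
    ∀ T : Finset (Fin n), T.card < k →
      ∀ z : ∀ i, X i, 0 ≤ β₀ + ∑ j, β j * f j (if j ∈ T then z j else x j) := by
  classical
  set v : Fin n → ℝ := fun i => β i * f i (x i) - p i with hv
  have key : ∀ (S : Finset (Fin n)) (z : ∀ i, X i),
      ∑ j, β j * f j (x j) - ∑ i ∈ S, v i
        ≤ β₀ + ∑ j, β j * f j (if j ∈ S then z j else x j) - β₀ := by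
    intro S z
    have h1 : ∀ j : Fin n, β j * f j (x j) - (if j ∈ S then v j else 0)
        ≤ β j * f j (if j ∈ S then z j else x j) := by
      intro j
      by_cases hj : j ∈ S
      · simp only [hj, if_true, hv]
        have := (hp j).2 (z j)
        linarith
      · simp [hj]
    calc ∑ j, β j * f j (x j) - ∑ i ∈ S, v i
        = ∑ j, (β j * f j (x j) - (if j ∈ S then v j else 0)) := by
          have h2 : ∑ j, (if j ∈ S then v j else 0) = ∑ i ∈ S, v i := by
            rw [Finset.sum_ite_mem, Finset.univ_inter]
          rw [← h2, ← Finset.sum_sub_distrib]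
      _ ≤ ∑ j, β j * f j (if j ∈ S then z j else x j) := Finset.sum_le_sum fun j _ => h1 j
      _ = β₀ + ∑ j, β j * f j (if j ∈ S then z j else x j) - β₀ := by ring
  constructor
  · choose z hz using fun i => (hp i).1
    refine ⟨z, ?_⟩
    set S := (Finset.univ.filter fun j : Fin n => (j : ℕ) < k).image σ with hS
    have h1 : ∀ j : Fin n, β j * f j (if j ∈ S then z j else x j)
        = β j * f j (x j) - (if j ∈ S then v j else 0) := by
      intro j
      by_cases hj : j ∈ S
      · simp only [hj, if_true, hv, hz j]; ring
      · simp [hj]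
    have h2 : ∑ j, β j * f j (if j ∈ S then z j else x j)
        = ∑ j, β j * f j (x j) - ∑ i ∈ S, v i := by
      have h2' : ∑ j, (if j ∈ S then v j else 0) = ∑ i ∈ S, v i := by
        rw [Finset.sum_ite_mem, Finset.univ_inter]
      rw [Finset.sum_congr rfl fun j _ => h1 j, Finset.sum_sub_distrib, h2']
    rw [h2]
    have := hcontr
    simp only [hv] at *
    linarith
  · intro T hT z
    have hmono : ∀ i j : Fin n, i ≤ j → v (σ j) ≤ v (σ i) := fun i j hij => hsort i j hij
    have hA : (T.image σ.symm).card = T.card :=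
      Finset.card_image_of_injective _ σ.symm.injective
    have hsum1 : ∑ i ∈ T.image σ.symm, v (σ i) = ∑ j ∈ T, v j := by
      rw [Finset.sum_image (fun a _ b _ h => σ.symm.injective h)]
      exact Finset.sum_congr rfl fun j _ => by simp
    have hsum2 : ∑ i ∈ Finset.univ.filter (fun j : Fin n => (j : ℕ) < T.card), v (σ i)
        = ∑ i ∈ (Finset.univ.filter fun j : Fin n => (j : ℕ) < T.card).image σ, v i := by
      rw [Finset.sum_image (fun a _ b _ h => σ.injective h)]
    have hle : ∑ j ∈ T, v j
        ≤ ∑ i ∈ (Finset.univ.filter fun j : Fin n => (j : ℕ) < T.card).image σ, v i := by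
      rw [← hsum1, ← hsum2]
      exact sum_le_sum_prefix (fun i => v (σ i)) hmono _ hA
    have h0 := hmin T.card hT
    have h1 := key T z
    simp only [hv] at *
    linarith
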